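/- arXiv:2006.07266 — 4 statements merged into one kernel-verified Lean document; each statement's English description precedes it below -/
import Mathlib

section
/- Let G be a locally compact Abelian group, K ⊆ G compact with non-empty interior, and 1 ≤ p < ∞. The space BS^p_K(G) of locally p-integrable functions f with ‖f‖_{S^p_K} < ∞, equipped with the norm ‖·‖_{S^p_K}, is a Banach space (every Cauchy sequence converges in this norm). -/
open MeasureTheory Filter Topology
open scoped ENNReal Pointwise

noncomputable section

variable {G : Type*} [AddCommGroup G] [TopologicalSpace G] [IsTopologicalAddGroup G]
  [LocallyCompactSpace G] [MeasurableSpace G] [BorelSpace G]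

/-- Translation operator: `Tt t f = f (· - t)`. -/
def Tt (t : G) (f : G → ℂ) : G → ℂ := fun x => f (x - t)

/-- Stepanov `p`-norm with respect to the set `K`:
`sup_y ( θ_G(K)⁻¹ ∫_{y+K} |f|^p )^(1/p)`. -/
def SNorm (μ : Measure G) (K : Set G) (p : ℝ) (f : G → ℂ) : ℝ≥0∞ :=
  ⨆ y : G, ((∫⁻ x in y +ᵥ K, (‖f x‖₊ : ℝ≥0∞) ^ p ∂μ) / μ K) ^ (1 / p)

/-- A set `R ⊆ G` is relatively dense if `R + C = G` for some compact `C`. -/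
def RelativelyDense (R : Set G) : Prop :=
  ∃ C : Set G, IsCompact C ∧ R + C = Set.univ

/-- `f` is Stepanov `p`-almost periodic (w.r.t. `K`) if for every `ε > 0` the set of
`ε`-almost periods in the Stepanov norm is relatively dense. -/
def StepanovAP (μ : Measure G) (K : Set G) (p : ℝ) (f : G → ℂ) : Prop :=
  ∀ ε : ℝ, 0 < ε →
    RelativelyDense {t : G | SNorm μ K p (f - Tt t f) < ENNReal.ofReal ε}

/-- `f ∈ L^p_loc(G)`. -/
def MemLpLoc (μ : Measure G) (p : ℝ) (f : G → ℂ) : Prop :=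
  AEStronglyMeasurable f μ ∧
    ∀ C : Set G, IsCompact C → (∫⁻ x in C, (‖f x‖₊ : ℝ≥0∞) ^ p ∂μ) < ⊤

/-- A continuous character of `G`. -/
def IsChar (χ : G → ℂ) : Prop :=
  Continuous χ ∧ (∀ x y, χ (x + y) = χ x * χ y) ∧ ∀ x, ‖χ x‖ = 1

/-- A trigonometric polynomial: a finite linear combination of continuous characters. -/
def IsTrigPoly (P : G → ℂ) : Prop :=
  ∃ (n : ℕ) (c : Fin n → ℂ) (χ : Fin n → G → ℂ),
    (∀ i, IsChar (χ i)) ∧ P = fun x => ∑ i, c i * χ i x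

/-- A van Hove sequence: precompact open sets whose `K`-boundaries are
asymptotically negligible. -/
def IsVanHove (μ : Measure G) (A : ℕ → Set G) : Prop :=
  (∀ n, IsOpen (A n) ∧ IsCompact (closure (A n))) ∧
    ∀ K : Set G, IsCompact K →
      Tendsto (fun n =>
        μ ((closure (A n + K) \ A n) ∪ (((A n)ᶜ - K) ∩ closure (A n))) / μ (A n))
        atTop (nhds 0)

/-- The Weyl `p`-seminorm along the sequence `A`. -/
def WSemi (μ : Measure G) (A : ℕ → Set G) (p : ℝ) (f : G → ℂ) : ℝ≥0∞ :=
  Filter.limsup (fun n => SNorm μ (A n) p f) atTop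

/-- `f` is Weyl `p`-almost periodic w.r.t. `A`: approximable by trigonometric
polynomials in the Weyl seminorm. -/
def WeylAP (μ : Measure G) (A : ℕ → Set G) (p : ℝ) (f : G → ℂ) : Prop :=
  ∀ ε : ℝ, 0 < ε → ∃ P : G → ℂ, IsTrigPoly P ∧ WSemi μ A p (f - P) < ENNReal.ofReal ε


/-!
On a translate `y +ᵥ K` the Stepanov norm dominates the `L^p(μ|y +ᵥ K)` norm up to the factor
`μ K ^ (1 / p)`, uniformly in `y`. A Stepanov-Cauchy sequence therefore has a subsequence that is
fast Cauchy in every `L^p(μ|y +ᵥ K)`, hence converges a.e. on every translate. Since `G` need not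
be σ-compact this is not convergence `μ`-a.e., so the limit `g` is taken pointwise along
measurable representatives. Fatou's lemma on each translate then bounds `SNorm (f m - g)` by the
Cauchy bound, and a finite Stepanov norm gives local `p`-integrability because a compact set is
covered by finitely many translates of `interior K`.
-/

theorem exists_strictMono_lt_of_cauchy {d : ℕ → ℕ → ℝ≥0∞}
    (hd : ∀ ε : ℝ, 0 < ε → ∃ N : ℕ, ∀ m ≥ N, ∀ n ≥ N, d m n < ENNReal.ofReal ε)
    {ε : ℕ → ℝ} (hε : ∀ N, 0 < ε N) :
    ∃ φ : ℕ → ℕ, StrictMono φ ∧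
      ∀ N a b, N ≤ a → N ≤ b → d (φ a) (φ b) < ENNReal.ofReal (ε N) := by
  obtain ⟨φ, hφ, hφN⟩ := extraction_forall_of_eventually'
    (P := fun N k => ∀ m ≥ k, ∀ n ≥ k, d m n < ENNReal.ofReal (ε N)) fun N => by
      obtain ⟨k₀, hk₀⟩ := hd (ε N) (hε N)
      exact ⟨k₀, fun k hk m hm n hn => hk₀ m (hk.trans hm) n (hk.trans hn)⟩
  exact ⟨φ, hφ, fun N a b ha hb => hφN N (φ a) (hφ.monotone ha) (φ b) (hφ.monotone hb)⟩

theorem exists_stronglyMeasurable_forall_ae_tendsto {α ι E : Type*} [MeasurableSpace α]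
    [TopologicalSpace E] [Nonempty E] [TopologicalSpace.IsCompletelyMetrizableSpace E]
    {μ : Measure α} {ν : ι → Measure α} (hν : ∀ i, ν i ≪ μ) {f : ℕ → α → E}
    (hf : ∀ n, AEStronglyMeasurable (f n) μ)
    (hconv : ∀ i, ∀ᵐ x ∂ν i, ∃ l, Tendsto (fun n => f n x) atTop (𝓝 l)) :
    ∃ g : α → E, StronglyMeasurable g ∧
      ∀ i, ∀ᵐ x ∂ν i, Tendsto (fun n => f n x) atTop (𝓝 (g x)) := by
  refine ⟨fun x => limUnder atTop fun n => (hf n).mk (f n) x,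
    StronglyMeasurable.limUnder fun n => (hf n).stronglyMeasurable_mk, fun i => ?_⟩
  have hmk : ∀ᵐ x ∂ν i, ∀ n, f n x = (hf n).mk (f n) x :=
    hν i (ae_all_iff.2 fun n => (hf n).ae_eq_mk)
  filter_upwards [hconv i, hmk] with x hx hx_mk
  simp only [← hx_mk]
  exact tendsto_nhds_limUnder hx

section Stepanov

variable {X : Type*} [AddCommGroup X] [MeasurableSpace X] {μ : Measure X} {K : Set X} {p : ℝ}

theorem SNorm_eq_iSup_eLpNorm' (hp : 0 ≤ p) (u : X → ℂ) :
    SNorm μ K p u = ⨆ y : X, eLpNorm' u p (μ.restrict (y +ᵥ K)) / μ K ^ (1 / p) := by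
  refine iSup_congr fun y => ?_
  rw [ENNReal.div_rpow_of_nonneg _ _ (one_div_nonneg.2 hp)]
  rfl

theorem SNorm_le_iff (hp : 0 < p) (hK0 : μ K ≠ 0) (hKt : μ K ≠ ⊤) {u : X → ℂ} {s : ℝ≥0∞} :
    SNorm μ K p u ≤ s ↔ ∀ y : X, eLpNorm' u p (μ.restrict (y +ᵥ K)) ≤ s * μ K ^ (1 / p) := by
  have hc0 : μ K ^ (1 / p) ≠ 0 := (ENNReal.rpow_pos (pos_iff_ne_zero.2 hK0) hKt).ne'
  have hct : μ K ^ (1 / p) ≠ ⊤ := ENNReal.rpow_ne_top_of_nonneg (by positivity) hKt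
  simp only [SNorm_eq_iSup_eLpNorm' hp.le, iSup_le_iff, ENNReal.div_le_iff hc0 hct]

theorem SNorm_neg (u : X → ℂ) : SNorm μ K p (-u) = SNorm μ K p u := by
  simp only [SNorm, Pi.neg_apply, nnnorm_neg]

theorem SNorm_add_le (hp : 1 ≤ p) {u v : X → ℂ} (hu : AEStronglyMeasurable u μ)
    (hv : AEStronglyMeasurable v μ) : SNorm μ K p (u + v) ≤ SNorm μ K p u + SNorm μ K p v := by
  simp only [SNorm_eq_iSup_eLpNorm' (zero_le_one.trans hp)]
  refine iSup_le fun y => ?_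
  calc eLpNorm' (u + v) p (μ.restrict (y +ᵥ K)) / μ K ^ (1 / p)
      ≤ (eLpNorm' u p (μ.restrict (y +ᵥ K)) + eLpNorm' v p (μ.restrict (y +ᵥ K))) /
          μ K ^ (1 / p) := by
        gcongr
        exact eLpNorm'_add_le hu.restrict hv.restrict hp
    _ = eLpNorm' u p (μ.restrict (y +ᵥ K)) / μ K ^ (1 / p) +
          eLpNorm' v p (μ.restrict (y +ᵥ K)) / μ K ^ (1 / p) := ENNReal.add_div
    _ ≤ _ := add_le_add
          (le_iSup (fun y => eLpNorm' u p (μ.restrict (y +ᵥ K)) / μ K ^ (1 / p)) y)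
          (le_iSup (fun y => eLpNorm' v p (μ.restrict (y +ᵥ K)) / μ K ^ (1 / p)) y)

theorem SNorm_sub_le (hp : 1 ≤ p) {u v : X → ℂ} (hu : AEStronglyMeasurable u μ)
    (hv : AEStronglyMeasurable v μ) : SNorm μ K p (u - v) ≤ SNorm μ K p u + SNorm μ K p v := by
  simpa only [sub_eq_add_neg, SNorm_neg] using SNorm_add_le (K := K) hp hu hv.neg

theorem SNorm_ne_top_of_SNorm_sub_ne_top (hp : 1 ≤ p) {u v : X → ℂ}
    (hu : AEStronglyMeasurable u μ) (hv : AEStronglyMeasurable v μ) (hu_fin : SNorm μ K p u ≠ ⊤)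
    (huv_fin : SNorm μ K p (u - v) ≠ ⊤) : SNorm μ K p v ≠ ⊤ := by
  have hv_le := SNorm_sub_le (K := K) hp hu (hu.sub hv)
  rw [sub_sub_cancel] at hv_le
  exact ne_top_of_le_ne_top (ENNReal.add_ne_top.2 ⟨hu_fin, huv_fin⟩) hv_le

theorem SNorm_le_of_ae_tendsto (hp : 0 < p) (hK0 : μ K ≠ 0) (hKt : μ K ≠ ⊤)
    {u : ℕ → X → ℂ} {v : X → ℂ} (hu : ∀ n, AEStronglyMeasurable (u n) μ)
    (hlim : ∀ y : X, ∀ᵐ x ∂μ.restrict (y +ᵥ K), Tendsto (fun n => u n x) atTop (𝓝 (v x)))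
    {s : ℝ≥0∞} (hs : ∀ᶠ n in atTop, SNorm μ K p (u n) ≤ s) : SNorm μ K p v ≤ s := by
  refine (SNorm_le_iff hp hK0 hKt).2 fun y => ?_
  calc eLpNorm' v p (μ.restrict (y +ᵥ K))
      ≤ atTop.liminf fun n => eLpNorm' (u n) p (μ.restrict (y +ᵥ K)) :=
        Lp.eLpNorm'_lim_le_liminf_eLpNorm' hp (fun n => (hu n).restrict) (hlim y)
    _ ≤ s * μ K ^ (1 / p) :=
        liminf_le_of_frequently_le' (hs.mono fun n hn => (SNorm_le_iff hp hK0 hKt).1 hn y).frequently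

theorem ae_restrict_vadd_exists_tendsto (hp : 1 ≤ p) (hK0 : μ K ≠ 0) (hKt : μ K ≠ ⊤)
    {u : ℕ → X → ℂ} (hu : ∀ n, AEStronglyMeasurable (u n) μ) {B : ℕ → ℝ≥0∞}
    (hB : ∑' N, B N ≠ ⊤) (hfast : ∀ N m n, N ≤ m → N ≤ n → SNorm μ K p (u m - u n) < B N)
    (y : X) : ∀ᵐ x ∂μ.restrict (y +ᵥ K), ∃ l, Tendsto (fun n => u n x) atTop (𝓝 l) := by
  have hp0 : 0 < p := zero_lt_one.trans_le hp
  have hc0 : μ K ^ (1 / p) ≠ 0 := (ENNReal.rpow_pos (pos_iff_ne_zero.2 hK0) hKt).ne'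
  have hct : μ K ^ (1 / p) ≠ ⊤ := ENNReal.rpow_ne_top_of_nonneg (by positivity) hKt
  refine Lp.ae_tendsto_of_cauchy_eLpNorm' (fun n => (hu n).restrict) hp
    (B := fun N => B N * μ K ^ (1 / p)) ?_ fun N m n hm hn => ?_
  · rw [ENNReal.tsum_mul_right]
    exact ENNReal.mul_ne_top hB hct
  · calc eLpNorm' (u m - u n) p (μ.restrict (y +ᵥ K))
        ≤ SNorm μ K p (u m - u n) * μ K ^ (1 / p) := (SNorm_le_iff hp0 hK0 hKt).1 le_rfl y
      _ < B N * μ K ^ (1 / p) := ENNReal.mul_lt_mul_left hc0 hct (hfast N m n hm hn)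

theorem setLIntegral_vadd_lt_top_of_SNorm_ne_top (hp : 0 < p) (hKt : μ K ≠ ⊤) {u : X → ℂ}
    (hu : SNorm μ K p u ≠ ⊤) (y : X) : ∫⁻ x in y +ᵥ K, (‖u x‖₊ : ℝ≥0∞) ^ p ∂μ < ⊤ := by
  have hy : ((∫⁻ x in y +ᵥ K, (‖u x‖₊ : ℝ≥0∞) ^ p ∂μ) / μ K) ^ (1 / p) ≠ ⊤ :=
    ne_top_of_le_ne_top hu (le_iSup (fun y : X =>
      ((∫⁻ x in y +ᵥ K, (‖u x‖₊ : ℝ≥0∞) ^ p ∂μ) / μ K) ^ (1 / p)) y)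
  rw [ne_eq, ENNReal.rpow_eq_top_iff_of_pos (by positivity), ENNReal.div_eq_top] at hy
  exact lt_top_iff_ne_top.2 fun h => hy (Or.inr ⟨h, hKt⟩)

theorem memLpLoc_of_SNorm_ne_top [TopologicalSpace X] [ContinuousAdd X] (hp : 0 < p)
    (hKt : μ K ≠ ⊤) (hK : (interior K).Nonempty) {u : X → ℂ} (hmeas : AEStronglyMeasurable u μ)
    (hu : SNorm μ K p u ≠ ⊤) : MemLpLoc μ p u := by
  refine ⟨hmeas, fun C hC => ?_⟩
  obtain ⟨k, hk⟩ := hK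
  obtain ⟨t, hCt⟩ := hC.elim_finite_subcover (fun y : X => y +ᵥ interior K)
    (fun y => isOpen_interior.vadd y) fun x _ => Set.mem_iUnion.2 ⟨x - k, k, hk, sub_add_cancel x k⟩
  have hC_sub : C ⊆ ⋃ y : t, (y : X) +ᵥ K := by
    refine hCt.trans fun x hx => ?_
    obtain ⟨y, hy, hxy⟩ := Set.mem_iUnion₂.1 hx
    exact Set.mem_iUnion.2 ⟨⟨y, hy⟩, Set.vadd_set_mono interior_subset hxy⟩
  calc ∫⁻ x in C, (‖u x‖₊ : ℝ≥0∞) ^ p ∂μ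
      ≤ ∫⁻ x in ⋃ y : t, (y : X) +ᵥ K, (‖u x‖₊ : ℝ≥0∞) ^ p ∂μ := lintegral_mono_set hC_sub
    _ ≤ ∑' y : t, ∫⁻ x in (y : X) +ᵥ K, (‖u x‖₊ : ℝ≥0∞) ^ p ∂μ := lintegral_iUnion_le _ _
    _ < ⊤ := by
      rw [tsum_fintype]
      exact ENNReal.sum_lt_top.2 fun y _ => setLIntegral_vadd_lt_top_of_SNorm_ne_top hp hKt hu y

theorem SNorm_sub_le_of_cauchy_of_ae_tendsto (hp : 0 < p) (hK0 : μ K ≠ 0) (hKt : μ K ≠ ⊤)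
    {f : ℕ → X → ℂ} (hf : ∀ n, AEStronglyMeasurable (f n) μ)
    (hcauchy : ∀ ε : ℝ, 0 < ε → ∃ N : ℕ, ∀ m ≥ N, ∀ n ≥ N,
      SNorm μ K p (f m - f n) < ENNReal.ofReal ε)
    {φ : ℕ → ℕ} (hφ : StrictMono φ) {g : X → ℂ}
    (hlim : ∀ y : X, ∀ᵐ x ∂μ.restrict (y +ᵥ K), Tendsto (fun k => f (φ k) x) atTop (𝓝 (g x)))
    {ε : ℝ} (hε : 0 < ε) : ∃ N, ∀ m ≥ N, SNorm μ K p (f m - g) ≤ ENNReal.ofReal ε := by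
  obtain ⟨N, hN⟩ := hcauchy ε hε
  refine ⟨N, fun m hm => SNorm_le_of_ae_tendsto hp hK0 hKt (fun k => (hf m).sub (hf (φ k)))
    (fun y => (hlim y).mono fun x hx => tendsto_const_nhds.sub hx) ?_⟩
  filter_upwards [eventually_ge_atTop N] with k hk
  exact (hN m hm (φ k) (hk.trans (hφ.id_le k))).le

end Stepanov

theorem BSpK_complete (μ : Measure G) [μ.IsAddHaarMeasure]
    (p : ℝ) (hp : 1 ≤ p) (K : Set G) (hK : IsCompact K) (hK' : (interior K).Nonempty)
    (f : ℕ → G → ℂ) (hmem : ∀ n, MemLpLoc μ p (f n))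
    (hfin : ∀ n, SNorm μ K p (f n) ≠ ⊤)
    (hcauchy : ∀ ε : ℝ, 0 < ε → ∃ N : ℕ, ∀ m ≥ N, ∀ n ≥ N,
      SNorm μ K p (f m - f n) < ENNReal.ofReal ε) :
    ∃ g : G → ℂ, MemLpLoc μ p g ∧ SNorm μ K p g ≠ ⊤ ∧
      ∀ ε : ℝ, 0 < ε → ∃ N : ℕ, ∀ n ≥ N,
        SNorm μ K p (f n - g) < ENNReal.ofReal ε := by
  have hp0 : 0 < p := zero_lt_one.trans_le hp
  have hK0 : μ K ≠ 0 :=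
    ((isOpen_interior.measure_pos μ hK').trans_le (measure_mono interior_subset)).ne'
  have hKt : μ K ≠ ⊤ := hK.measure_lt_top.ne
  have hmeas n := (hmem n).1
  obtain ⟨φ, hφ, hfast⟩ :=
    exists_strictMono_lt_of_cauchy hcauchy (ε := fun N => (1 / 2 : ℝ) ^ N) fun N => by positivity
  have hB : ∑' N, ENNReal.ofReal ((1 / 2 : ℝ) ^ N) ≠ ⊤ := by
    rw [← ENNReal.ofReal_tsum_of_nonneg (fun N => by positivity) summable_geometric_two]
    exact ENNReal.ofReal_ne_top
  obtain ⟨g, hg, hlim⟩ := exists_stronglyMeasurable_forall_ae_tendsto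
    (fun y => Measure.absolutelyContinuous_of_le Measure.restrict_le_self) (fun k => hmeas (φ k))
    (ae_restrict_vadd_exists_tendsto hp hK0 hKt (fun k => hmeas (φ k)) hB hfast)
  have hclose {ε : ℝ} (hε : 0 < ε) :=
    SNorm_sub_le_of_cauchy_of_ae_tendsto hp0 hK0 hKt hmeas hcauchy hφ hlim hε
  have hgfin : SNorm μ K p g ≠ ⊤ := by
    obtain ⟨N, hN⟩ := hclose one_pos
    exact SNorm_ne_top_of_SNorm_sub_ne_top hp (hmeas N) hg.aestronglyMeasurable (hfin N)
      (ne_top_of_le_ne_top ENNReal.ofReal_ne_top (hN N le_rfl))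
  refine ⟨g, memLpLoc_of_SNorm_ne_top hp0 hKt hK' hg.aestronglyMeasurable hgfin, hgfin,
    fun ε hε => ?_⟩
  obtain ⟨N, hN⟩ := hclose (half_pos hε)
  exact ⟨N, fun n hn => (hN n hn).trans_lt ((ENNReal.ofReal_lt_ofReal_iff hε).2 (half_lt_self hε))⟩
end
end

section
/- Let f be Stepanov p-almost periodic on G and ε > 0. Then there exists a bounded Stepanov p-almost periodic function b such that ‖f − b‖_{S^p} < ε; moreover b can be taken as the truncation f_L(x) = f(x) if |f(x)| ≤ L, and L·f(x)/|f(x)| otherwise, for some L ∈ ℕ. -/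
open MeasureTheory Filter Topology
open scoped ENNReal Pointwise

noncomputable section

variable {G : Type*} [AddCommGroup G] [TopologicalSpace G] [IsTopologicalAddGroup G]
  [LocallyCompactSpace G] [MeasurableSpace G] [BorelSpace G]

/-- Truncation of `f` at level `L`. -/
def trunc (L : ℝ) (f : G → ℂ) : G → ℂ := fun x =>
  if ‖f x‖ ≤ L then f x else (L / ‖f x‖ : ℝ) • f x

open scoped NNReal

/-! The truncation map `radialTrunc L` is `2`-Lipschitz, so it turns almost periods of `f` into
almost periods of `trunc L f`; likewise `g = f - trunc L f` is a `3`-Lipschitz image of `f`. Given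
an `ε/6`-almost period `t` and `c` in the compact set `C` of relative density, the local `L^p` norm
of `g` on `(t + c) +ᵥ K` is at most `SNorm (g - Tt t g) ≤ ε/2` plus the local norm of `g` on
`c +ᵥ K ⊆ C + K`, and the latter tends to `0` uniformly in `c` as `L → ∞`, by dominated
convergence on the compact set `C + K`. -/

section RadialTrunc

variable {E : Type*} [NormedAddCommGroup E] [NormedSpace ℝ E] {L : ℝ}

def radialTrunc (L : ℝ) (z : E) : E := if ‖z‖ ≤ L then z else (L / ‖z‖) • z

lemma trunc_eq_radialTrunc_comp {G : Type*} (L : ℝ) (f : G → ℂ) :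
    trunc L f = radialTrunc L ∘ f := rfl

lemma sub_radialTrunc_comp {α : Type*} (L : ℝ) (f : α → E) :
    f - radialTrunc L ∘ f = (fun z => z - radialTrunc L z) ∘ f := rfl

lemma radialTrunc_of_norm_le {z : E} (h : ‖z‖ ≤ L) : radialTrunc L z = z := if_pos h

lemma norm_radialTrunc_le (hL : 0 ≤ L) (z : E) : ‖radialTrunc L z‖ ≤ L := by
  rw [radialTrunc]
  split_ifs with h
  · exact h
  · have hz : 0 < ‖z‖ := hL.trans_lt (not_le.mp h)
    rw [norm_smul, Real.norm_of_nonneg (by positivity), div_mul_cancel₀ _ hz.ne']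

lemma norm_sub_radialTrunc (hL : 0 ≤ L) (z : E) : ‖z - radialTrunc L z‖ = max (‖z‖ - L) 0 := by
  by_cases h : ‖z‖ ≤ L
  · rw [radialTrunc_of_norm_le h, sub_self, norm_zero, max_eq_right (by linarith)]
  · have hz : 0 < ‖z‖ := hL.trans_lt (not_le.mp h)
    have hLz : L / ‖z‖ ≤ 1 := (div_le_one hz).2 (not_le.mp h).le
    have hsmul : z - (L / ‖z‖) • z = (1 - L / ‖z‖) • z := by rw [sub_smul, one_smul]
    rw [radialTrunc, if_neg h, hsmul, norm_smul, Real.norm_of_nonneg (by linarith),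
      sub_mul, one_mul, div_mul_cancel₀ _ hz.ne', max_eq_left (by linarith)]

lemma norm_sub_radialTrunc_le (hL : 0 ≤ L) (z : E) : ‖z - radialTrunc L z‖ ≤ ‖z‖ := by
  rw [norm_sub_radialTrunc hL]
  exact max_le (by linarith) (norm_nonneg z)

lemma norm_radialTrunc_sub_radialTrunc_le_of_norm_le (hL : 0 ≤ L) {z : E} (hz : ‖z‖ ≤ L)
    (w : E) : ‖radialTrunc L z - radialTrunc L w‖ ≤ 2 * ‖z - w‖ := by
  have hw : ‖w - radialTrunc L w‖ ≤ ‖z - w‖ := by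
    rw [norm_sub_radialTrunc hL]
    refine max_le ?_ (norm_nonneg _)
    linarith [norm_sub_norm_le w z, norm_sub_rev w z]
  calc ‖radialTrunc L z - radialTrunc L w‖ = ‖(z - w) + (w - radialTrunc L w)‖ := by
        rw [radialTrunc_of_norm_le hz]; abel_nf
    _ ≤ ‖z - w‖ + ‖w - radialTrunc L w‖ := norm_add_le _ _
    _ ≤ 2 * ‖z - w‖ := by linarith

lemma norm_radialTrunc_sub_radialTrunc_le_of_lt_norm (hL : 0 ≤ L) {z w : E} (hz : L < ‖z‖)
    (hw : L < ‖w‖) : ‖radialTrunc L z - radialTrunc L w‖ ≤ 2 * ‖z - w‖ := by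
  have hz0 : 0 < ‖z‖ := hL.trans_lt hz
  have hw0 : 0 < ‖w‖ := hL.trans_lt hw
  have hLz : L / ‖z‖ ≤ 1 := (div_le_one hz0).2 hz.le
  have hradial : |L / ‖z‖ - L / ‖w‖| * ‖w‖ = L / ‖z‖ * |‖z‖ - ‖w‖| := by
    have hfactor : L / ‖z‖ - L / ‖w‖ = L / ‖z‖ * ((‖w‖ - ‖z‖) / ‖w‖) := by field_simp
    rw [hfactor, abs_mul, abs_of_nonneg (div_nonneg hL hz0.le), abs_div, abs_of_pos hw0, mul_assoc,
      div_mul_cancel₀ _ hw0.ne', abs_sub_comm]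
  calc ‖radialTrunc L z - radialTrunc L w‖
      = ‖(L / ‖z‖) • (z - w) + (L / ‖z‖ - L / ‖w‖) • w‖ := by
        rw [radialTrunc, radialTrunc, if_neg hz.not_ge, if_neg hw.not_ge, smul_sub, sub_smul]
        abel_nf
    _ ≤ L / ‖z‖ * ‖z - w‖ + L / ‖z‖ * |‖z‖ - ‖w‖| := by
        refine (norm_add_le _ _).trans_eq ?_
        rw [norm_smul, norm_smul, Real.norm_of_nonneg (by positivity), Real.norm_eq_abs, hradial]
    _ ≤ 1 * ‖z - w‖ + 1 * ‖z - w‖ := by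
        gcongr
        exact abs_norm_sub_norm_le z w
    _ = 2 * ‖z - w‖ := by ring

lemma lipschitzWith_radialTrunc (hL : 0 ≤ L) : LipschitzWith 2 (radialTrunc (E := E) L) := by
  refine LipschitzWith.of_dist_le_mul fun z w => ?_
  rw [dist_eq_norm, dist_eq_norm, NNReal.coe_ofNat]
  rcases le_or_gt ‖z‖ L with hz | hz
  · exact norm_radialTrunc_sub_radialTrunc_le_of_norm_le hL hz w
  rcases le_or_gt ‖w‖ L with hw | hw
  · rw [norm_sub_rev, norm_sub_rev z]
    exact norm_radialTrunc_sub_radialTrunc_le_of_norm_le hL hw z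
  · exact norm_radialTrunc_sub_radialTrunc_le_of_lt_norm hL hz hw

lemma lipschitzWith_sub_radialTrunc (hL : 0 ≤ L) :
    LipschitzWith 3 (fun z : E => z - radialTrunc L z) :=
  (LipschitzWith.id.sub (lipschitzWith_radialTrunc hL)).weaken (by norm_num)

lemma tendsto_eLpNorm_sub_radialTrunc {α : Type*} [MeasurableSpace α] {ν : Measure α}
    {p : ℝ≥0∞} (hp : p ≠ ∞) {f : α → E} (hf : MemLp f p ν) :
    Tendsto (fun L : ℕ => eLpNorm (fun x => f x - radialTrunc L (f x)) p ν) atTop (𝓝 0) := by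
  rcases eq_or_ne p 0 with rfl | hp0
  · simp
  have hq : 0 < p.toReal := ENNReal.toReal_pos hp0 hp
  simp_rw [eLpNorm_eq_lintegral_rpow_enorm_toReal hp0 hp]
  have hint : Tendsto (fun L : ℕ => ∫⁻ x, ‖f x - radialTrunc L (f x)‖ₑ ^ p.toReal ∂ν) atTop
      (𝓝 0) := by
    have hlim : ∀ x, Tendsto (fun L : ℕ => ‖f x - radialTrunc L (f x)‖ₑ ^ p.toReal) atTop
        (𝓝 0) := fun x => tendsto_const_nhds.congr' <| by
      filter_upwards [eventually_ge_atTop ⌈‖f x‖⌉₊] with L hL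
      rw [radialTrunc_of_norm_le ((Nat.le_ceil _).trans (Nat.cast_le.2 hL)), sub_self,
        enorm_zero, ENNReal.zero_rpow_of_pos hq]
    simpa using tendsto_lintegral_of_dominated_convergence' (fun x => ‖f x‖ₑ ^ p.toReal)
      (fun L => ((lipschitzWith_sub_radialTrunc L.cast_nonneg).continuous.comp_aestronglyMeasurable
        hf.1).enorm.pow_const _)
      (fun L => ae_of_all _ fun x => ENNReal.rpow_le_rpow
        (enorm_le_iff_norm_le.2 (norm_sub_radialTrunc_le L.cast_nonneg _)) hq.le)
      (lintegral_rpow_enorm_lt_top_of_eLpNorm_lt_top hp0 hp hf.2).ne (ae_of_all _ hlim)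
  have hroot := (ENNReal.continuous_rpow_const (y := 1 / p.toReal)).tendsto 0 |>.comp hint
  rwa [ENNReal.zero_rpow_of_pos (one_div_pos.2 hq)] at hroot

end RadialTrunc

lemma RelativelyDense.mono {G : Type*} [AddCommGroup G] [TopologicalSpace G] {R R' : Set G}
    (hR : RelativelyDense R) (h : R ⊆ R') : RelativelyDense R' := by
  obtain ⟨C, hC, hRC⟩ := hR
  exact ⟨C, hC, Set.eq_univ_of_univ_subset (hRC ▸ Set.add_subset_add_right h)⟩

lemma MemLpLoc.memLp_restrict {G : Type*} [TopologicalSpace G] [MeasurableSpace G]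
    {μ : Measure G} {p : ℝ} (hp : 0 < p) {f : G → ℂ} (hf : MemLpLoc μ p f) {C : Set G}
    (hC : IsCompact C) : MemLp f (ENNReal.ofReal p) (μ.restrict C) := by
  refine ⟨hf.1.restrict, ?_⟩
  rw [eLpNorm_eq_lintegral_rpow_enorm_toReal (ENNReal.ofReal_pos.2 hp).ne' ENNReal.ofReal_ne_top,
    ENNReal.toReal_ofReal hp.le]
  simp_rw [enorm_eq_nnnorm]
  exact ENNReal.rpow_lt_top_of_nonneg (by positivity) (hf.2 C hC).ne

section Stepanov

variable {G : Type*} [AddCommGroup G] [MeasurableSpace G] {μ : Measure G} {K : Set G} {p : ℝ}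

def stepanovMeasure (μ : Measure G) (K : Set G) (y : G) : Measure G :=
  (μ K)⁻¹ • μ.restrict (y +ᵥ K)

lemma SNorm_eq_iSup_eLpNorm (hp : 0 < p) (f : G → ℂ) :
    SNorm μ K p f = ⨆ y, eLpNorm f (ENNReal.ofReal p) (stepanovMeasure μ K y) := by
  simp_rw [eLpNorm_eq_lintegral_rpow_enorm_toReal (ENNReal.ofReal_pos.2 hp).ne'
    ENNReal.ofReal_ne_top, ENNReal.toReal_ofReal hp.le, stepanovMeasure, lintegral_smul_measure,
    smul_eq_mul, ← ENNReal.div_eq_inv_mul, enorm_eq_nnnorm]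
  rfl

lemma stepanovMeasure_le_of_mem {C : Set G} {c : G} (hc : c ∈ C) :
    stepanovMeasure μ K c ≤ (μ K)⁻¹ • μ.restrict (C + K) :=
  smul_le_smul_left _ <| Measure.restrict_mono (by
    rintro _ ⟨k, hk, rfl⟩
    exact Set.add_mem_add hc hk) le_rfl

lemma SNorm_le_mul_SNorm (hp : 0 < p) {g h : G → ℂ} {c : ℝ≥0} (hgh : ∀ x, ‖g x‖ₑ ≤ c * ‖h x‖ₑ) :
    SNorm μ K p g ≤ c * SNorm μ K p h := by
  simp_rw [SNorm_eq_iSup_eLpNorm hp, ENNReal.mul_iSup]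
  exact iSup_mono fun y => eLpNorm_le_mul_eLpNorm_of_ae_le_mul' (ae_of_all _ hgh) _

lemma SNorm_comp_sub_Tt_le (hp : 0 < p) {φ : ℂ → ℂ} {c : ℝ≥0} (hφ : LipschitzWith c φ)
    (f : G → ℂ) (t : G) :
    SNorm μ K p (φ ∘ f - Tt t (φ ∘ f)) ≤ c * SNorm μ K p (f - Tt t f) :=
  SNorm_le_mul_SNorm hp fun x => by
    have hx := hφ (f x) (f (x - t))
    rw [edist_eq_enorm_sub, edist_eq_enorm_sub] at hx
    exact hx

lemma eLpNorm_Tt [MeasurableAdd G] [μ.IsAddRightInvariant] (q : ℝ≥0∞) (h : G → ℂ) (t y : G) :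
    eLpNorm (Tt t h) q (stepanovMeasure μ K y) = eLpNorm h q (stepanovMeasure μ K (y - t)) := by
  have hemb : MeasurableEmbedding (fun x : G => x - t) :=
    (MeasurableEquiv.subRight t).measurableEmbedding
  have hmap : (stepanovMeasure μ K y).map (fun x => x - t) = stepanovMeasure μ K (y - t) := by
    rw [stepanovMeasure, Measure.map_smul,
      ((measurePreserving_sub_right μ t).restrict_image_emb hemb _).map_eq, stepanovMeasure,
      ← Set.image_vadd, ← Set.image_vadd, Set.image_image]
    simp only [vadd_eq_add, add_sub_right_comm]
  rw [← hmap, hemb.eLpNorm_map_measure]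
  rfl

lemma SNorm_le_add_of_add_eq_univ [MeasurableAdd G] [μ.IsAddRightInvariant] (hp : 1 ≤ p)
    {g : G → ℂ} (hg : AEStronglyMeasurable g μ) {R C : Set G} (hRC : R + C = Set.univ)
    {a b : ℝ≥0∞} (ha : ∀ t ∈ R, SNorm μ K p (g - Tt t g) ≤ a)
    (hb : ∀ c ∈ C, eLpNorm g (ENNReal.ofReal p) (stepanovMeasure μ K c) ≤ b) :
    SNorm μ K p g ≤ a + b := by
  have hp0 : 0 < p := by linarith
  rw [SNorm_eq_iSup_eLpNorm hp0]
  refine iSup_le fun y => ?_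
  obtain ⟨t, ht, c, hc, rfl⟩ : y ∈ R + C := hRC ▸ Set.mem_univ y
  have hgt : AEStronglyMeasurable (Tt t g) μ :=
    hg.comp_quasiMeasurePreserving (measurePreserving_sub_right μ t).quasiMeasurePreserving
  have hac : stepanovMeasure μ K (t + c) ≪ μ :=
    (Measure.absolutelyContinuous_of_le Measure.restrict_le_self).smul_left _
  calc eLpNorm g (ENNReal.ofReal p) (stepanovMeasure μ K (t + c))
      = eLpNorm ((g - Tt t g) + Tt t g) (ENNReal.ofReal p) (stepanovMeasure μ K (t + c)) := by
        rw [sub_add_cancel]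
    _ ≤ eLpNorm (g - Tt t g) (ENNReal.ofReal p) (stepanovMeasure μ K (t + c))
        + eLpNorm (Tt t g) (ENNReal.ofReal p) (stepanovMeasure μ K (t + c)) :=
        eLpNorm_add_le ((hg.sub hgt).mono_ac hac) (hgt.mono_ac hac) (by simpa using hp)
    _ ≤ a + b := by
        gcongr
        · exact (le_iSup (fun y => eLpNorm (g - Tt t g) _ (stepanovMeasure μ K y)) _).trans
            ((SNorm_eq_iSup_eLpNorm hp0 _).symm.le.trans (ha t ht))
        · rw [eLpNorm_Tt, add_sub_cancel_left]
          exact hb c hc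

lemma SNorm_comp_le_of_add_eq_univ [MeasurableAdd G] [μ.IsAddRightInvariant] (hp : 1 ≤ p)
    {f : G → ℂ} (hf : AEStronglyMeasurable f μ) {φ : ℂ → ℂ} {c : ℝ≥0} (hφ : LipschitzWith c φ)
    {R C : Set G} (hRC : R + C = Set.univ) {δ : ℝ≥0∞} (hR : ∀ t ∈ R, SNorm μ K p (f - Tt t f) ≤ δ) :
    SNorm μ K p (φ ∘ f) ≤
      c * δ + eLpNorm (φ ∘ f) (ENNReal.ofReal p) ((μ K)⁻¹ • μ.restrict (C + K)) :=
  SNorm_le_add_of_add_eq_univ hp (hφ.continuous.comp_aestronglyMeasurable hf) hRC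
    (fun t ht => (SNorm_comp_sub_Tt_le (by linarith) hφ f t).trans (by gcongr; exact hR t ht))
    (fun _ hc => eLpNorm_mono_measure _ (stepanovMeasure_le_of_mem hc))

variable [TopologicalSpace G]

lemma StepanovAP.comp_lipschitzWith (hp : 0 < p) {f : G → ℂ} (hf : StepanovAP μ K p f)
    {φ : ℂ → ℂ} {c : ℝ≥0} (hφ : LipschitzWith c φ) : StepanovAP μ K p (φ ∘ f) := by
  intro ε hε
  refine (hf (ε / (c + 1)) (by positivity)).mono fun t ht => ?_
  calc SNorm μ K p (φ ∘ f - Tt t (φ ∘ f)) ≤ c * SNorm μ K p (f - Tt t f) :=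
        SNorm_comp_sub_Tt_le hp hφ f t
    _ ≤ (c + 1 : ℝ≥0) * SNorm μ K p (f - Tt t f) := by gcongr; exact le_self_add
    _ < (c + 1 : ℝ≥0) * ENNReal.ofReal (ε / (c + 1)) :=
        ENNReal.mul_lt_mul_right (by simp) ENNReal.coe_ne_top ht
    _ = ENNReal.ofReal ε := by
        rw [← ENNReal.ofReal_coe_nnreal, ← ENNReal.ofReal_mul (by positivity), NNReal.coe_add,
          NNReal.coe_one, mul_div_cancel₀ _ (by positivity)]

end Stepanov

theorem stepanovAP_approx_bounded (μ : Measure G) [μ.IsAddHaarMeasure]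
    (p : ℝ) (hp : 1 ≤ p) (K : Set G) (hK : IsCompact K) (hK' : (interior K).Nonempty)
    (f : G → ℂ) (hf : MemLpLoc μ p f) (hap : StepanovAP μ K p f)
    (ε : ℝ) (hε : 0 < ε) :
    ∃ L : ℕ, StepanovAP μ K p (trunc (L : ℝ) f) ∧
      (∀ x : G, ‖trunc (L : ℝ) f x‖ ≤ (L : ℝ)) ∧
      SNorm μ K p (f - trunc (L : ℝ) f) < ENNReal.ofReal ε := by
  have hp0 : 0 < p := by linarith
  obtain ⟨C, hC, hRC⟩ := hap (ε / 6) (by positivity)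
  have hfCK : MemLp f (ENNReal.ofReal p) ((μ K)⁻¹ • μ.restrict (C + K)) :=
    (hf.memLp_restrict hp0 (hC.add hK)).smul_measure
      (ENNReal.inv_ne_top.2 (Measure.measure_pos_of_nonempty_interior μ hK').ne')
  obtain ⟨L, hL⟩ := ((tendsto_eLpNorm_sub_radialTrunc ENNReal.ofReal_ne_top hfCK).eventually
    (gt_mem_nhds (ENNReal.ofReal_pos.2 (by positivity : 0 < ε / 2)))).exists
  have hL0 : (0 : ℝ) ≤ L := L.cast_nonneg
  simp only [trunc_eq_radialTrunc_comp, sub_radialTrunc_comp]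
  refine ⟨L, hap.comp_lipschitzWith hp0 (lipschitzWith_radialTrunc hL0),
    fun x => norm_radialTrunc_le hL0 (f x), ?_⟩
  have h3 : ((3 : ℝ≥0) : ℝ≥0∞) * ENNReal.ofReal (ε / 6) = ENNReal.ofReal (ε / 2) := by
    rw [← ENNReal.ofReal_coe_nnreal, NNReal.coe_ofNat, ← ENNReal.ofReal_mul (by norm_num)]
    ring_nf
  calc SNorm μ K p ((fun z => z - radialTrunc L z) ∘ f)
      ≤ ENNReal.ofReal (ε / 2) + eLpNorm ((fun z => z - radialTrunc L z) ∘ f)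
          (ENNReal.ofReal p) ((μ K)⁻¹ • μ.restrict (C + K)) :=
        h3 ▸ SNorm_comp_le_of_add_eq_univ hp hf.1 (lipschitzWith_sub_radialTrunc hL0) hRC
          fun _ ht => ht.le
    _ < ENNReal.ofReal (ε / 2) + ENNReal.ofReal (ε / 2) :=
        ENNReal.add_lt_add_left ENNReal.ofReal_ne_top hL
    _ = ENNReal.ofReal ε := by rw [← ENNReal.ofReal_add (by positivity) (by positivity), add_halves]
end
end

section
/- Let G be a second countable locally compact Abelian group and f ∈ L^p_loc(G). Then f is Stepanov p-almost periodic (has relatively dense ε-almost periods in ‖·‖_{S^p} for every ε > 0) if and only if the orbit {T_t f : t ∈ G} is precompact (totally bounded) in the ‖·‖_{S^p}-topology. -/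
open MeasureTheory Filter Topology
open scoped ENNReal Pointwise

noncomputable section

variable {G : Type*} [AddCommGroup G] [TopologicalSpace G] [IsTopologicalAddGroup G]
  [LocallyCompactSpace G] [MeasurableSpace G] [BorelSpace G]

/-!
Translation is continuous in `L^p` on compact sets, by approximating `f` restricted to a compact
set with a compactly supported continuous function. For an `S^p`-almost periodic `f` this upgrades
to `‖f - T_u f‖_{S^p} → 0` as `u → 0`: writing the centre of a window as `r + c`, with `r` an
almost period and `c` in the compact set `C` from relative density, the window at `r + c` differs
from the window at `c` by two almost-period errors. Covering `C` by finitely many translates of a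
neighbourhood on which `‖f - T_u f‖_{S^p}` is small then gives a finite `ε`-net of the orbit.
Conversely, if `T_t f` is `ε`-close to `T_z f` for some `z` in a finite set `s`, then `t - z` is an
`ε`-almost period, so `t ∈ (almost periods) + s`.
-/

section TranslationContinuity

variable {H E : Type*} [AddCommGroup H] [TopologicalSpace H] [IsTopologicalAddGroup H]
  [NormedAddCommGroup E]

theorem HasCompactSupport.tendsto_iSup_enorm_sub_comp_sub {g : H → E} (hg : Continuous g)
    (hgs : HasCompactSupport g) :
    Tendsto (fun u => ⨆ x, ‖g x - g (x - u)‖ₑ) (𝓝 0) (𝓝 0) := by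
  -- in a commutative group this is the uniformity of the group structure
  let := IsTopologicalAddGroup.rightUniformSpace H
  refine ENNReal.tendsto_nhds_zero.2 fun ε hε => ?_
  have hunif := hgs.uniformContinuous_of_continuous hg (edist_mem_uniformity hε)
  rw [uniformity_eq_comap_nhds_zero' H] at hunif
  obtain ⟨V, hV, hVsub⟩ := hunif
  filter_upwards [(continuous_neg.tendsto' (0 : H) 0 neg_zero).eventually hV] with u hu
  refine iSup_le fun x => ?_
  have hx : (x, x - u) ∈ (fun q : H × H => q.2 + -q.1) ⁻¹' V := by
    show x - u + -x ∈ V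
    rwa [show x - u + -x = -u by abel]
  rw [← edist_eq_enorm_sub]
  exact (hVsub hx).le

theorem HasCompactSupport.tendsto_eLpNorm_sub_comp_sub [WeaklyLocallyCompactSpace H]
    [MeasurableSpace H] (μ : Measure H) [IsFiniteMeasureOnCompacts μ] (p : ℝ≥0∞) {g : H → E}
    (hg : Continuous g) (hgs : HasCompactSupport g) :
    Tendsto (fun u => eLpNorm (fun x => g x - g (x - u)) p μ) (𝓝 0) (𝓝 0) := by
  obtain ⟨W, hWc, hW⟩ := exists_compact_mem_nhds (0 : H)
  set S := tsupport g + W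
  have hsupp : ∀ u ∈ W, Function.support (fun x => g x - g (x - u)) ⊆ S := by
    intro u hu x hx
    by_cases hgx : g x = 0
    · refine ⟨x - u, subset_tsupport g fun h => hx ?_, u, hu, sub_add_cancel x u⟩
      simp [hgx, h]
    · exact ⟨x, subset_tsupport g hgx, 0, mem_of_mem_nhds hW, add_zero x⟩
  have hbound : Tendsto (fun u => (⨆ x, ‖g x - g (x - u)‖ₑ) * μ S ^ p.toReal⁻¹) (𝓝 0)
      (𝓝 0) := by
    have hS : μ S ^ p.toReal⁻¹ ≠ ∞ := ENNReal.rpow_ne_top_of_nonneg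
      (inv_nonneg.2 ENNReal.toReal_nonneg) (hgs.isCompact.add hWc).measure_lt_top.ne
    simpa using ENNReal.Tendsto.mul_const (hgs.tendsto_iSup_enorm_sub_comp_sub hg) (Or.inr hS)
  refine tendsto_of_tendsto_of_tendsto_of_le_of_le' tendsto_const_nhds hbound
    (Eventually.of_forall fun _ => bot_le) ?_
  filter_upwards [hW] with u hu
  rw [← eLpNorm_restrict_eq_of_support_subset (hsupp u hu)]
  simpa using eLpNorm_le_of_ae_enorm_bound (μ := μ.restrict S) (p := p)
    (Eventually.of_forall fun x => le_iSup (fun x => ‖g x - g (x - u)‖ₑ) x)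

theorem MeasureTheory.MemLp.tendsto_eLpNorm_sub_comp_sub [NormedSpace ℝ E]
    [WeaklyLocallyCompactSpace H] [NormalSpace H] [MeasurableSpace H] [BorelSpace H]
    (μ : Measure H) [μ.Regular] [μ.IsAddRightInvariant] {p : ℝ≥0∞} (hp : 1 ≤ p) (hp' : p ≠ ∞)
    {f : H → E} (hf : MemLp f p μ) :
    Tendsto (fun u => eLpNorm (fun x => f x - f (x - u)) p μ) (𝓝 0) (𝓝 0) := by
  refine ENNReal.tendsto_nhds_zero.2 fun ε hε => ?_
  have hε3 : ε / 3 ≠ 0 := ENNReal.div_ne_zero.2 ⟨hε.ne', ENNReal.ofNat_ne_top⟩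
  obtain ⟨g, hgs, hfg, hg, hgp⟩ := hf.exists_hasCompactSupport_eLpNorm_sub_le hp' hε3
  filter_upwards [ENNReal.tendsto_nhds_zero.1 (hgs.tendsto_eLpNorm_sub_comp_sub μ p hg) _
    (pos_iff_ne_zero.2 hε3)] with u hu
  have hfm := hf.aestronglyMeasurable
  have hgm := hgp.aestronglyMeasurable
  have hpres := measurePreserving_sub_right μ u
  have htail : eLpNorm (fun x => g (x - u) - f (x - u)) p μ = eLpNorm (f - g) p μ := by
    rw [eLpNorm_sub_comm, ← eLpNorm_comp_measurePreserving (hgm.sub hfm) hpres]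
    rfl
  calc eLpNorm (fun x => f x - f (x - u)) p μ
      = eLpNorm ((f - g) + (fun x => g x - g (x - u)) + fun x => g (x - u) - f (x - u)) p μ := by
        congr 1; ext x; simp only [Pi.add_apply, Pi.sub_apply]; abel
    _ ≤ eLpNorm (f - g) p μ + eLpNorm (fun x => g x - g (x - u)) p μ
          + eLpNorm (fun x => g (x - u) - f (x - u)) p μ := by
        have hgu : AEStronglyMeasurable (fun x => g (x - u)) μ := hgm.comp_measurePreserving hpres
        have hfu : AEStronglyMeasurable (fun x => f (x - u)) μ := hfm.comp_measurePreserving hpres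
        refine (eLpNorm_add_le ((hfm.sub hgm).add (hgm.sub hgu)) (hgu.sub hfu) hp).trans ?_
        exact add_le_add (eLpNorm_add_le (hfm.sub hgm) (hgm.sub hgu) hp) le_rfl
    _ ≤ ε / 3 + ε / 3 + ε / 3 := by rw [htail]; gcongr
    _ = ε := ENNReal.add_thirds ε

end TranslationContinuity

section Translation

variable {H : Type*} [AddCommGroup H]

theorem Tt_Tt (s t : H) (g : H → ℂ) : Tt s (Tt t g) = Tt (s + t) g := by
  ext x
  simp only [Tt, sub_sub]

theorem Tt_sub_Tt (f : H → ℂ) (t z : H) : Tt t f - Tt z f = Tt z (Tt (t - z) f - f) := by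
  ext x
  simp only [Tt, Pi.sub_apply, sub_sub_sub_cancel_right]

end Translation

section StepanovNorm

variable {H : Type*} [AddCommGroup H] [MeasurableSpace H] {μ : Measure H} {K : Set H} {p : ℝ}

def windowNorm (μ : Measure H) (K : Set H) (p : ℝ) (y : H) (g : H → ℂ) : ℝ≥0∞ :=
  ((∫⁻ x in y +ᵥ K, (‖g x‖₊ : ℝ≥0∞) ^ p ∂μ) / μ K) ^ (1 / p)

theorem SNorm_eq_iSup_windowNorm (g : H → ℂ) : SNorm μ K p g = ⨆ y, windowNorm μ K p y g :=
  rfl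

theorem windowNorm_le_SNorm (y : H) (g : H → ℂ) : windowNorm μ K p y g ≤ SNorm μ K p g :=
  le_iSup (fun y => windowNorm μ K p y g) y

theorem windowNorm_eq_eLpNorm (hp : 0 < p) (y : H) (g : H → ℂ) :
    windowNorm μ K p y g = eLpNorm g (ENNReal.ofReal p) (μ.restrict (y +ᵥ K)) / μ K ^ (1 / p) := by
  rw [eLpNorm_eq_eLpNorm' (by simpa using hp) ENNReal.ofReal_ne_top, ENNReal.toReal_ofReal hp.le,
    windowNorm, eLpNorm', ENNReal.div_rpow_of_nonneg _ _ (by positivity)]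
  rfl

theorem windowNorm_le_of_subset (hp : 0 < p) {B : Set H} {y : H} (hyB : y +ᵥ K ⊆ B)
    (g : H → ℂ) :
    windowNorm μ K p y g ≤ eLpNorm g (ENNReal.ofReal p) (μ.restrict B) / μ K ^ (1 / p) := by
  rw [windowNorm_eq_eLpNorm hp]
  gcongr

theorem windowNorm_sub_le (hp : 1 ≤ p) {g h k : H → ℂ} (hg : AEStronglyMeasurable g μ)
    (hh : AEStronglyMeasurable h μ) (hk : AEStronglyMeasurable k μ) (y : H) :
    windowNorm μ K p y (g - k) ≤ windowNorm μ K p y (g - h) + windowNorm μ K p y (h - k) := by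
  simp only [windowNorm_eq_eLpNorm (zero_lt_one.trans_le hp), ← ENNReal.add_div]
  gcongr
  rw [show g - k = (g - h) + (h - k) by abel]
  exact eLpNorm_add_le (hg.sub hh).restrict (hh.sub hk).restrict (ENNReal.one_le_ofReal.2 hp)

theorem SNorm_sub_le_s7 (hp : 1 ≤ p) {g h k : H → ℂ} (hg : AEStronglyMeasurable g μ)
    (hh : AEStronglyMeasurable h μ) (hk : AEStronglyMeasurable k μ) :
    SNorm μ K p (g - k) ≤ SNorm μ K p (g - h) + SNorm μ K p (h - k) :=
  iSup_le fun y => (windowNorm_sub_le hp hg hh hk y).trans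
    (add_le_add (windowNorm_le_SNorm y _) (windowNorm_le_SNorm y _))

theorem SNorm_sub_comm (g h : H → ℂ) : SNorm μ K p (g - h) = SNorm μ K p (h - g) := by
  simp only [SNorm, Pi.sub_apply, ← enorm_eq_nnnorm, enorm_sub_rev]

variable [MeasurableAdd H] [μ.IsAddRightInvariant]

theorem MeasureTheory.AEStronglyMeasurable.Tt {g : H → ℂ} (hg : AEStronglyMeasurable g μ) (t : H) :
    AEStronglyMeasurable (Tt t g) μ :=
  hg.comp_measurePreserving (measurePreserving_sub_right μ t)

theorem windowNorm_Tt (t y : H) (g : H → ℂ) :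
    windowNorm μ K p y (Tt t g) = windowNorm μ K p (y - t) g := by
  have hpre : (fun x => x - t) ⁻¹' ((y - t) +ᵥ K) = y +ᵥ K := by
    ext x
    simp only [Set.mem_preimage, Set.mem_vadd_set_iff_neg_vadd_mem, vadd_eq_add]
    rw [show -(y - t) + (x - t) = -y + x by abel]
  rw [windowNorm, windowNorm, ← hpre]
  exact congrArg (fun I => (I / μ K) ^ (1 / p))
    ((measurePreserving_sub_right μ t).setLIntegral_comp_preimage_emb
      (measurableEmbedding_subRight t) (fun x => (‖g x‖₊ : ℝ≥0∞) ^ p) _)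

theorem SNorm_Tt (t : H) (g : H → ℂ) : SNorm μ K p (Tt t g) = SNorm μ K p g := by
  simp only [SNorm_eq_iSup_windowNorm, windowNorm_Tt]
  exact (Equiv.subRight t).iSup_comp (g := fun y => windowNorm μ K p y g)

theorem SNorm_Tt_sub_Tt (f : H → ℂ) (t z : H) :
    SNorm μ K p (Tt t f - Tt z f) = SNorm μ K p (f - Tt (t - z) f) := by
  rw [Tt_sub_Tt, SNorm_Tt, SNorm_sub_comm]

end StepanovNorm

theorem MemLpLoc.memLp_indicator {H : Type*} [TopologicalSpace H] [MeasurableSpace H]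
    {μ : Measure H} {p : ℝ} (hp : 0 < p) {f : H → ℂ} (hf : MemLpLoc μ p f) {E : Set H}
    (hE : IsCompact E) (hEm : MeasurableSet E) : MemLp (E.indicator f) (ENNReal.ofReal p) μ := by
  refine ⟨hf.1.indicator hEm, ?_⟩
  rw [eLpNorm_indicator_eq_eLpNorm_restrict hEm,
    eLpNorm_eq_eLpNorm' (by simpa using hp) ENNReal.ofReal_ne_top, ENNReal.toReal_ofReal hp.le]
  exact ENNReal.rpow_lt_top_of_nonneg (by positivity) (hf.2 E hE).ne

theorem MemLpLoc.tendsto_eLpNorm_restrict_sub_Tt {H : Type*} [AddCommGroup H]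
    [TopologicalSpace H] [IsTopologicalAddGroup H] [WeaklyLocallyCompactSpace H] [NormalSpace H]
    [MeasurableSpace H] [BorelSpace H] {μ : Measure H} [μ.Regular] [μ.IsAddRightInvariant]
    {p : ℝ} (hp : 1 ≤ p) {f : H → ℂ} (hf : MemLpLoc μ p f) {B : Set H} (hB : IsCompact B) :
    Tendsto (fun u => eLpNorm (f - Tt u f) (ENNReal.ofReal p) (μ.restrict B)) (𝓝 0) (𝓝 0) := by
  obtain ⟨W, hWc, hW⟩ := exists_compact_mem_nhds (0 : H)
  -- closures, because compact sets need not be measurable here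
  set D := closure B
  set E := closure (D + -W)
  have hDm : MeasurableSet D := isClosed_closure.measurableSet
  have hEm : MeasurableSet E := isClosed_closure.measurableSet
  have hDE : ∀ x ∈ D, ∀ w ∈ W, x - w ∈ E := fun x hx w hw =>
    subset_closure (by simpa [sub_eq_add_neg] using Set.add_mem_add hx (Set.neg_mem_neg.2 hw))
  have hf₀ := hf.memLp_indicator (zero_lt_one.trans_le hp) (hB.closure.add hWc.neg).closure hEm
  refine tendsto_of_tendsto_of_tendsto_of_le_of_le' tendsto_const_nhds
    (hf₀.tendsto_eLpNorm_sub_comp_sub μ (ENNReal.one_le_ofReal.2 hp) ENNReal.ofReal_ne_top)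
    (Eventually.of_forall fun _ => bot_le) ?_
  filter_upwards [hW] with u hu
  have hagree : ∀ x ∈ D, (f - Tt u f) x = E.indicator f x - E.indicator f (x - u) := by
    intro x hx
    have hxE : x ∈ E := by simpa using hDE x hx 0 (mem_of_mem_nhds hW)
    rw [Set.indicator_of_mem hxE, Set.indicator_of_mem (hDE x hx u hu)]
    rfl
  calc eLpNorm (f - Tt u f) (ENNReal.ofReal p) (μ.restrict B)
      ≤ eLpNorm (f - Tt u f) (ENNReal.ofReal p) (μ.restrict D) :=
        eLpNorm_mono_measure _ (Measure.restrict_mono subset_closure le_rfl)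
    _ = eLpNorm (fun x => E.indicator f x - E.indicator f (x - u)) (ENNReal.ofReal p)
          (μ.restrict D) := eLpNorm_congr_ae ((ae_restrict_iff' hDm).2 (ae_of_all _ hagree))
    _ ≤ _ := eLpNorm_mono_measure _ Measure.restrict_le_self

section RelativelyDense

variable {H : Type*} [AddCommGroup H] [TopologicalSpace H]

theorem RelativelyDense.mono_s7 {R S : Set H} (h : RelativelyDense R) (hRS : R ⊆ S) :
    RelativelyDense S := by
  obtain ⟨C, hC, hRC⟩ := h
  exact ⟨C, hC, Set.eq_univ_of_univ_subset (hRC ▸ Set.add_subset_add_right hRS)⟩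

variable [MeasurableSpace H] {μ : Measure H} {K : Set H} {p : ℝ} {f : H → ℂ}

theorem StepanovAP.relativelyDense_lt (h : StepanovAP μ K p f) {ε : ℝ≥0∞} (hε : 0 < ε) :
    RelativelyDense {t | SNorm μ K p (f - Tt t f) < ε} := by
  obtain ⟨r, -, hr, hrε⟩ := ENNReal.lt_iff_exists_real_btwn.1 hε
  exact (h r (ENNReal.ofReal_pos.1 hr)).mono_s7 fun t ht => lt_trans ht hrε

theorem StepanovAP.of_exists_finset_SNorm_Tt_sub_Tt_lt [MeasurableAdd H] [μ.IsAddRightInvariant]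
    (h : ∀ ε : ℝ, 0 < ε → ∃ s : Finset H, ∀ t : H, ∃ z ∈ s,
      SNorm μ K p (Tt t f - Tt z f) < ENNReal.ofReal ε) :
    StepanovAP μ K p f := by
  intro ε hε
  obtain ⟨s, hs⟩ := h ε hε
  refine ⟨s, s.finite_toSet.isCompact, Set.eq_univ_of_forall fun t => ?_⟩
  obtain ⟨z, hz, hzt⟩ := hs t
  exact ⟨t - z, by rwa [Set.mem_ofPred_eq, ← SNorm_Tt_sub_Tt], z, hz, sub_add_cancel t z⟩

end RelativelyDense

section StepanovAP

variable {H : Type*} [AddCommGroup H] [TopologicalSpace H] [IsTopologicalAddGroup H]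
  [WeaklyLocallyCompactSpace H] [NormalSpace H] [MeasurableSpace H] [BorelSpace H]
  {μ : Measure H} [μ.Regular] [μ.IsAddRightInvariant] {K : Set H} {p : ℝ} {f : H → ℂ}

theorem StepanovAP.tendsto_SNorm_sub_Tt (h : StepanovAP μ K p f) (hp : 1 ≤ p)
    (hK : IsCompact K) (hK0 : μ K ≠ 0) (hf : MemLpLoc μ p f) :
    Tendsto (fun u => SNorm μ K p (f - Tt u f)) (𝓝 0) (𝓝 0) := by
  have hp0 : 0 < p := zero_lt_one.trans_le hp
  refine ENNReal.tendsto_nhds_zero.2 fun ε hε => ?_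
  have hε3 : 0 < ε / 3 := ENNReal.div_pos hε.ne' ENNReal.ofNat_ne_top
  obtain ⟨C, hC, hRC⟩ := h.relativelyDense_lt hε3
  have hKp : μ K ^ (1 / p) ≠ 0 :=
    (ENNReal.rpow_pos_of_nonneg (pos_iff_ne_zero.2 hK0) (by positivity)).ne'
  have hloc : Tendsto (fun u => eLpNorm (f - Tt u f) (ENNReal.ofReal p) (μ.restrict (C + K))
      / μ K ^ (1 / p)) (𝓝 0) (𝓝 0) := by
    simpa using ENNReal.Tendsto.div_const (hf.tendsto_eLpNorm_restrict_sub_Tt hp (hC.add hK))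
      (Or.inr hKp)
  filter_upwards [ENNReal.tendsto_nhds_zero.1 hloc _ hε3] with u hu
  refine iSup_le fun y => ?_
  obtain ⟨r, hr, c, hc, rfl⟩ : y ∈ {t | SNorm μ K p (f - Tt t f) < ε / 3} + C := hRC ▸ trivial
  have hfm := hf.1
  calc windowNorm μ K p (r + c) (f - Tt u f)
      ≤ windowNorm μ K p (r + c) (f - Tt r f) + (windowNorm μ K p (r + c) (Tt r f - Tt (r + u) f)
          + windowNorm μ K p (r + c) (Tt (r + u) f - Tt u f)) := by
        refine (windowNorm_sub_le hp hfm (hfm.Tt r) (hfm.Tt u) _).trans ?_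
        gcongr
        exact windowNorm_sub_le hp (hfm.Tt r) (hfm.Tt (r + u)) (hfm.Tt u) _
    _ ≤ ε / 3 + (ε / 3 + ε / 3) := by
        have hmid : Tt r f - Tt (r + u) f = Tt r (f - Tt u f) := by rw [← Tt_Tt]; rfl
        gcongr
        · exact (windowNorm_le_SNorm _ _).trans hr.le
        · rw [hmid, windowNorm_Tt, add_sub_cancel_left]
          exact (windowNorm_le_of_subset hp0 (Set.vadd_set_subset_add hc) _).trans hu
        · refine (windowNorm_le_SNorm _ _).trans ?_
          rw [SNorm_Tt_sub_Tt, add_sub_cancel_right]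
          exact hr.le
    _ = ε := by rw [← add_assoc, ENNReal.add_thirds]

theorem StepanovAP.exists_finset_SNorm_Tt_sub_Tt_lt (h : StepanovAP μ K p f) (hp : 1 ≤ p)
    (hK : IsCompact K) (hK0 : μ K ≠ 0) (hf : MemLpLoc μ p f) {ε : ℝ≥0∞} (hε : 0 < ε) :
    ∃ s : Finset H, ∀ t : H, ∃ z ∈ s, SNorm μ K p (Tt t f - Tt z f) < ε := by
  have hε2 : 0 < ε / 2 := ENNReal.half_pos hε.ne'
  obtain ⟨C, hC, hRC⟩ := h.relativelyDense_lt hε2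
  have hU : {u | SNorm μ K p (f - Tt u f) < ε / 2} ∈ 𝓝 0 :=
    h.tendsto_SNorm_sub_Tt hp hK hK0 hf (Iio_mem_nhds hε2)
  obtain ⟨s, -, hCs⟩ := hC.elim_nhds_subcover (fun z => z +ᵥ {u | SNorm μ K p (f - Tt u f) < ε / 2})
    fun z _ => by simpa using (vadd_mem_nhds_vadd_iff z (a := (0 : H))).2 hU
  refine ⟨s, fun t => ?_⟩
  obtain ⟨r, hr, c, hc, rfl⟩ : t ∈ {t | SNorm μ K p (f - Tt t f) < ε / 2} + C := hRC ▸ trivial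
  obtain ⟨z, hz, u, hu, rfl⟩ := Set.mem_iUnion₂.1 (hCs hc)
  refine ⟨z, hz, ?_⟩
  calc SNorm μ K p (Tt (r + (z +ᵥ u)) f - Tt z f)
      ≤ SNorm μ K p (Tt (r + (z +ᵥ u)) f - Tt (z +ᵥ u) f) + SNorm μ K p (Tt (z +ᵥ u) f - Tt z f) :=
        SNorm_sub_le_s7 hp (hf.1.Tt _) (hf.1.Tt _) (hf.1.Tt _)
    _ < ε / 2 + ε / 2 := by
        rw [SNorm_Tt_sub_Tt, SNorm_Tt_sub_Tt, add_sub_cancel_right, vadd_eq_add,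
          add_sub_cancel_left]
        exact ENNReal.add_lt_add hr hu
    _ = ε := ENNReal.add_halves ε

end StepanovAP

theorem stepanovAP_iff_totallyBounded [SecondCountableTopology G]
    (μ : Measure G) [μ.IsAddHaarMeasure]
    (p : ℝ) (hp : 1 ≤ p) (K : Set G) (hK : IsCompact K) (hK' : (interior K).Nonempty)
    (f : G → ℂ) (hf : MemLpLoc μ p f) :
    StepanovAP μ K p f ↔
      ∀ ε : ℝ, 0 < ε → ∃ s : Finset G, ∀ t : G, ∃ z ∈ s,
        SNorm μ K p (Tt t f - Tt z f) < ENNReal.ofReal ε := by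
  have hK0 : μ K ≠ 0 := (μ.measure_pos_of_nonempty_interior hK').ne'
  exact ⟨fun h ε hε => h.exists_finset_SNorm_Tt_sub_Tt_lt hp hK hK0 hf (ENNReal.ofReal_pos.2 hε),
    .of_exists_finset_SNorm_Tt_sub_Tt_lt⟩
end
end

section
/- If f is Weyl p-almost periodic with respect to a van Hove sequence (A_n), then |f| is Weyl p-almost periodic with respect to (A_n). -/
/-! Approximate `f` within `ε / 2` by a trigonometric polynomial `P`. Trigonometric polynomials
form a star-subalgebra, so `r (P * star P) = r (|P| ^ 2)` is one for every real polynomial `r`,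
and Weierstrass approximation of `√` on `[0, sup |P| ^ 2]` makes it uniformly `ε / 2`-close to
`|P|`. Then `| |f| - r (|P| ^ 2) | ≤ |f - P| + ε / 2` pointwise, and Minkowski's inequality for the
normalised restrictions of the translation-invariant measure carries this bound to every Stepanov
norm, hence to their `limsup`. -/

open MeasureTheory Filter Topology
open scoped ENNReal Pointwise

section TrigPoly

variable {G : Type*} [AddCommGroup G] [TopologicalSpace G]

namespace IsChar

variable {χ ψ : G → ℂ}

lemma one : IsChar (1 : G → ℂ) :=
  ⟨continuous_const, fun _ _ => (mul_one 1).symm, fun _ => norm_one⟩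

lemma mul (hχ : IsChar χ) (hψ : IsChar ψ) : IsChar (χ * ψ) := by
  refine ⟨hχ.1.mul hψ.1, fun x y => ?_, fun x => ?_⟩
  · simp only [Pi.mul_apply, hχ.2.1, hψ.2.1]; ring
  · simp only [Pi.mul_apply, norm_mul, hχ.2.2, hψ.2.2, one_mul]

lemma star (hχ : IsChar χ) : IsChar (star χ) := by
  refine ⟨continuous_star.comp hχ.1, fun x y => ?_, fun x => ?_⟩
  · simp only [Pi.star_apply, hχ.2.1, star_mul']
  · simp only [Pi.star_apply, norm_star, hχ.2.2]

end IsChar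

lemma isTrigPoly_iff_mem_span {P : G → ℂ} :
    IsTrigPoly P ↔ P ∈ Submodule.span ℂ {χ : G → ℂ | IsChar χ} := by
  rw [Submodule.mem_span_set']
  constructor
  · rintro ⟨n, c, χ, hχ, rfl⟩
    exact ⟨n, c, fun i => ⟨χ i, hχ i⟩, by ext x; simp⟩
  · rintro ⟨n, c, χ, rfl⟩
    exact ⟨n, c, fun i => χ i, fun i => (χ i).2, by ext x; simp⟩

variable (G) in
def trigPolyAlgebra : StarSubalgebra ℂ (G → ℂ) where
  toSubalgebra := (Submodule.span ℂ {χ : G → ℂ | IsChar χ}).toSubalgebra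
    (Submodule.subset_span IsChar.one) fun P Q hP hQ => by
      have hPQ := Submodule.mul_mem_mul hP hQ
      rw [Submodule.span_mul_span] at hPQ
      refine Submodule.span_mono ?_ hPQ
      rintro _ ⟨χ, hχ, ψ, hψ, rfl⟩
      exact hχ.mul hψ
  star_mem' {P} hP := by
    change P ∈ Submodule.span ℂ _ at hP
    change star P ∈ Submodule.span ℂ _
    induction hP using Submodule.span_induction with
    | mem χ hχ => exact Submodule.subset_span (IsChar.star hχ)
    | zero => simp
    | add P Q _ _ hP hQ => simpa only [star_add] using add_mem hP hQ
    | smul c P _ hP => simpa only [star_smul] using Submodule.smul_mem _ (star c) hP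

lemma isTrigPoly_iff_mem_trigPolyAlgebra {P : G → ℂ} :
    IsTrigPoly P ↔ P ∈ trigPolyAlgebra G :=
  isTrigPoly_iff_mem_span

namespace IsTrigPoly

variable {P : G → ℂ}

lemma continuous (hP : IsTrigPoly P) : Continuous P := by
  obtain ⟨n, c, χ, hχ, rfl⟩ := hP
  exact continuous_finsetSum _ fun i _ => continuous_const.mul (hχ i).1

lemma exists_norm_le (hP : IsTrigPoly P) : ∃ B, ∀ x, ‖P x‖ ≤ B := by
  obtain ⟨n, c, χ, hχ, rfl⟩ := hP
  refine ⟨∑ i, ‖c i‖, fun x => (norm_sum_le _ _).trans_eq ?_⟩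
  simp only [norm_mul, (hχ _).2.2, mul_one]

lemma aeval_mul_star (hP : IsTrigPoly P) (r : Polynomial ℝ) :
    IsTrigPoly (Polynomial.aeval (P * star P) r) := by
  have hP' := isTrigPoly_iff_mem_trigPolyAlgebra.1 hP
  have hPP : P * star P ∈ trigPolyAlgebra G := mul_mem hP' (star_mem hP')
  have := (Polynomial.aeval (⟨_, hPP⟩ : (trigPolyAlgebra G).toSubalgebra.restrictScalars ℝ) r).2
  rw [Polynomial.aeval_subalgebra_coe] at this
  exact isTrigPoly_iff_mem_trigPolyAlgebra.2 this

lemma exists_norm_sub_lt (hP : IsTrigPoly P) {ε : ℝ} (hε : 0 < ε) :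
    ∃ Q, IsTrigPoly Q ∧ ∀ x, ‖(‖P x‖ : ℂ) - Q x‖ < ε := by
  obtain ⟨B, hB⟩ := hP.exists_norm_le
  obtain ⟨r, hr⟩ := exists_polynomial_near_of_continuousOn 0 (B ^ 2) Real.sqrt
    Real.continuous_sqrt.continuousOn ε hε
  refine ⟨Polynomial.aeval (P * star P) r, hP.aeval_mul_star r, fun x => ?_⟩
  have hx : Polynomial.aeval (P * star P) r x = ((r.eval (‖P x‖ ^ 2) : ℝ) : ℂ) := by
    refine (Polynomial.aeval_algHom_apply (Pi.evalAlgHom ℝ (fun _ : G => ℂ) x) _ r).symm.trans ?_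
    simp only [Pi.evalAlgHom_apply, Pi.mul_apply, Pi.star_apply, Complex.star_def,
      Complex.mul_conj, Complex.normSq_eq_norm_sq]
    exact Polynomial.aeval_algebraMap_apply_eq_algebraMap_eval (A := ℂ) _ r
  have hsqrt : Real.sqrt (‖P x‖ ^ 2) = ‖P x‖ := Real.sqrt_sq (norm_nonneg _)
  have hmem : ‖P x‖ ^ 2 ∈ Set.Icc 0 (B ^ 2) :=
    ⟨sq_nonneg _, pow_le_pow_left₀ (norm_nonneg _) (hB x) 2⟩
  rw [hx, ← Complex.ofReal_sub, Complex.norm_real, Real.norm_eq_abs, abs_sub_comm]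
  simpa only [hsqrt] using hr _ hmem

end IsTrigPoly

end TrigPoly

section Seminorms

variable {α : Type*} [MeasurableSpace α] {ν : Measure α} {p δ : ℝ} {g u : α → ℂ}

lemma eLpNorm'_le_add_of_norm_le_add (hν : ν Set.univ ≤ 1) (hp : 1 ≤ p)
    (hu : AEStronglyMeasurable u ν) (hδ : 0 ≤ δ) (hgu : ∀ x, ‖g x‖ ≤ ‖u x‖ + δ) :
    eLpNorm' g p ν ≤ eLpNorm' u p ν + ENNReal.ofReal δ := by
  have hp0 : 0 < p := zero_lt_one.trans_le hp
  calc eLpNorm' g p ν ≤ eLpNorm' ((fun x => ‖u x‖) + fun _ => δ) p ν :=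
        eLpNorm'_mono_ae hp0.le (Eventually.of_forall fun x => (hgu x).trans (le_abs_self _))
    _ ≤ eLpNorm' (fun x => ‖u x‖) p ν + eLpNorm' (fun _ => δ) p ν :=
        eLpNorm'_add_le hu.norm aestronglyMeasurable_const hp
    _ ≤ eLpNorm' u p ν + ENNReal.ofReal δ := by
        rw [eLpNorm'_norm, eLpNorm'_const _ hp0, Real.enorm_eq_ofReal hδ]
        gcongr
        exact mul_le_of_le_one_right' (ENNReal.rpow_le_one hν (by positivity))

variable {G : Type*} [AddCommGroup G] [MeasurableSpace G]

lemma sNorm_eq_iSup_eLpNorm' (μ : Measure G) (K : Set G) (p : ℝ) (f : G → ℂ) :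
    SNorm μ K p f = ⨆ y : G, eLpNorm' f p ((μ K)⁻¹ • μ.restrict (y +ᵥ K)) := by
  simp only [SNorm, eLpNorm', lintegral_smul_measure, smul_eq_mul, ENNReal.div_eq_inv_mul, enorm]

variable {g u : G → ℂ}

lemma sNorm_le_add_of_norm_le_add (μ : Measure G) [μ.IsAddLeftInvariant] (K : Set G)
    (hp : 1 ≤ p) (hu : AEStronglyMeasurable u μ) (hδ : 0 ≤ δ)
    (hgu : ∀ x, ‖g x‖ ≤ ‖u x‖ + δ) :
    SNorm μ K p g ≤ SNorm μ K p u + ENNReal.ofReal δ := by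
  simp only [sNorm_eq_iSup_eLpNorm']
  refine iSup_le fun y => (eLpNorm'_le_add_of_norm_le_add ?_ hp
    (hu.restrict.smul_measure _) hδ hgu).trans ?_
  · rw [Measure.smul_apply, Measure.restrict_apply_univ, measure_vadd, smul_eq_mul]
    exact ENNReal.inv_mul_le_one _
  · gcongr
    exact le_iSup (fun y => eLpNorm' u p ((μ K)⁻¹ • μ.restrict (y +ᵥ K))) y

lemma wSemi_le_add_of_norm_le_add (μ : Measure G) [μ.IsAddLeftInvariant] (A : ℕ → Set G)
    (hp : 1 ≤ p) (hu : AEStronglyMeasurable u μ) (hδ : 0 ≤ δ)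
    (hgu : ∀ x, ‖g x‖ ≤ ‖u x‖ + δ) :
    WSemi μ A p g ≤ WSemi μ A p u + ENNReal.ofReal δ :=
  calc WSemi μ A p g ≤ limsup (fun n => SNorm μ (A n) p u + ENNReal.ofReal δ) atTop :=
        limsup_le_limsup (Eventually.of_forall fun n =>
          sNorm_le_add_of_norm_le_add μ (A n) hp hu hδ hgu)
    _ ≤ WSemi μ A p u + ENNReal.ofReal δ :=
        (limsup_add_const atTop _ _ (by isBoundedDefault) (by isBoundedDefault)).le

end Seminorms

variable {G : Type*} [AddCommGroup G] [TopologicalSpace G] [IsTopologicalAddGroup G]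
  [LocallyCompactSpace G] [MeasurableSpace G] [BorelSpace G]

theorem weylAP_abs_general (μ : Measure G) [μ.IsAddHaarMeasure]
    (A : ℕ → Set G)
    (p : ℝ) (hp : 1 ≤ p) (f : G → ℂ) (hf : MemLpLoc μ p f)
    (hap : WeylAP μ A p f) :
    WeylAP μ A p (fun x => (‖f x‖ : ℂ)) := by
  intro ε hε
  obtain ⟨P, hP, hfP⟩ := hap (ε / 2) (half_pos hε)
  obtain ⟨Q, hQ, hPQ⟩ := hP.exists_norm_sub_lt (half_pos hε)
  have hpt (x : G) : ‖((fun x => (‖f x‖ : ℂ)) - Q) x‖ ≤ ‖(f - P) x‖ + ε / 2 :=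
    calc ‖(‖f x‖ : ℂ) - Q x‖ ≤ ‖(‖f x‖ : ℂ) - ‖P x‖‖ + ‖(‖P x‖ : ℂ) - Q x‖ :=
          norm_sub_le_norm_sub_add_norm_sub _ _ _
      _ ≤ ‖f x - P x‖ + ε / 2 := by
          rw [← Complex.ofReal_sub, Complex.norm_real, Real.norm_eq_abs]
          exact add_le_add (abs_norm_sub_norm_le _ _) (hPQ x).le
  refine ⟨Q, hQ, ?_⟩
  calc _ ≤ WSemi μ A p (f - P) + ENNReal.ofReal (ε / 2) :=
        wSemi_le_add_of_norm_le_add μ A hp (hf.1.sub hP.continuous.aestronglyMeasurable)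
          (half_pos hε).le hpt
    _ < ENNReal.ofReal (ε / 2) + ENNReal.ofReal (ε / 2) :=
        ENNReal.add_lt_add_right ENNReal.ofReal_ne_top hfP
    _ = ENNReal.ofReal ε := by
        rw [← ENNReal.ofReal_add (half_pos hε).le (half_pos hε).le, add_halves]

theorem weylAP_abs [SigmaCompactSpace G] (μ : Measure G) [μ.IsAddHaarMeasure]
    (A : ℕ → Set G) (hA : IsVanHove μ A)
    (p : ℝ) (hp : 1 ≤ p) (f : G → ℂ) (hf : MemLpLoc μ p f)
    (hap : WeylAP μ A p f) :
    WeylAP μ A p (fun x => (‖f x‖ : ℂ)) :=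
  weylAP_abs_general μ A p hp f hf hap
end
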